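/- arXiv:1503.00752 — 5 statements merged into one kernel-verified Lean document; each statement's English description precedes it below -/
import Mathlib

section
/- Let a, b, c, n be non-negative integers with a + b + c ≤ n and n ≥ 1. Define the permutation Cut_{n,a,b,c} of Z/nZ which fixes k for k ∈ {0,…,a−1} ∪ {a+b+c,…,n−1}, sends k to k + c for k ∈ {a,…,a+b−1}, and sends k to k − b for k ∈ {a+b,…,a+b+c−1}. Then the composition T_{n,1} ∘ Cut_{n,a,b,c}, where T_{n,1}(k) = k − 1, is a cyclic permutation of Z/nZ if and only if gcd(c − 1, b + 1) = 1. -/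
/-!
Conjugating by the translation `x ↦ x + a` reduces to `a = 0`, and if `b = 0` or `c = 0` the
cut is the identity. Otherwise write `F = T ∘ Cut` and `s = b + c`. On the window
`{0, …, s - 1}`, every `j ≠ b` is sent to the window point `≡ j + (c - 1) (mod s)`, while
`F b = -1`, from which `F` walks down through all points `≥ s` to `s - 1 ≡ b + (c - 1)`. So the
first-return map to the window is the rotation by `c - 1` of `ℤ/sℤ`, and every other point lies
on the excursion from `b`: `F` is cyclic as soon as `c - 1` is a unit mod `s`, i.e.
`gcd(c - 1, b + 1) = 1`. Conversely, modulo any common divisor `e` of `c - 1` and `b + 1`, the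
residue of `min x (s - 1)` is `F`-invariant, and it separates `0` from `1`.
-/

/-- The permutation `Cut_{n,a,b,c}` of `ℤ/nℤ` (elements identified with `{0,…,n-1}`
via `ZMod.val`): it fixes `k` for `k < a` or `k ≥ a+b+c`, sends `k ↦ k + c` for
`a ≤ k < a+b`, and sends `k ↦ k - b` for `a+b ≤ k < a+b+c`. -/
def cutPerm (n a b c : ℕ) : ZMod n → ZMod n := fun k =>
  if k.val < a then k
  else if k.val < a + b then k + (c : ZMod n)
  else if k.val < a + b + c then k - (b : ZMod n)
  else k

open Function Relation

section Iterates

variable {α β : Type*}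

def IsCyclicMap (f : α → α) : Prop := ∀ x y, ∃ m : ℕ, f^[m] x = y

theorem reflTransGen_iff_exists_iterate_eq {f : α → α} {x y : α} :
    ReflTransGen (f · = ·) x y ↔ ∃ m : ℕ, f^[m] x = y := by
  constructor
  · intro h
    induction h with
    | refl => exact ⟨0, rfl⟩
    | tail _ hstep ih =>
      obtain ⟨m, rfl⟩ := ih
      exact ⟨m + 1, by rw [iterate_succ_apply', hstep]⟩
  · rintro ⟨m, rfl⟩
    induction m with
    | zero => exact .refl
    | succ m ih => exact ih.tail (iterate_succ_apply' f m x).symm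

theorem isCyclicMap_iff_forall_reflTransGen {f : α → α} :
    IsCyclicMap f ↔ ∀ x y, ReflTransGen (f · = ·) x y := by
  simp only [IsCyclicMap, reflTransGen_iff_exists_iterate_eq]

theorem isCyclicMap_iff_of_semiconj {f : α → α} {g : β → β} (e : α ≃ β)
    (h : Semiconj e f g) : IsCyclicMap f ↔ IsCyclicMap g := by
  constructor
  · intro hf x y
    obtain ⟨m, hm⟩ := hf (e.symm x) (e.symm y)
    refine ⟨m, ?_⟩
    rw [← e.apply_symm_apply x, ← (h.iterate_right m).eq, hm, e.apply_symm_apply]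
  · intro hg x y
    obtain ⟨m, hm⟩ := hg (e x) (e y)
    exact ⟨m, e.injective (by rw [(h.iterate_right m).eq, hm])⟩

theorem IsCyclicMap.apply_eq_of_apply_comp_eq {f : α → α} {χ : α → β} (hf : IsCyclicMap f)
    (hχ : ∀ x, χ (f x) = χ x) (x y : α) : χ x = χ y := by
  obtain ⟨m, rfl⟩ := hf x y
  simpa using (Semiconj.iterate_right (gb := id) hχ m x).symm

end Iterates

theorem isCyclicMap_sub_one {n : ℕ} [NeZero n] : IsCyclicMap fun k : ZMod n => k - 1 := by
  intro x y
  refine ⟨(x - y).val, ?_⟩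
  simp only [sub_eq_add_neg, add_right_iterate, nsmul_eq_mul, mul_neg_one, ZMod.natCast_zmod_val]
  ring

theorem ZMod.exists_add_nat_mul_eq_of_isUnit {s : ℕ} [NeZero s] {k : ZMod s} (hk : IsUnit k)
    (i j : ZMod s) : ∃ t : ℕ, i + t * k = j := by
  obtain ⟨k', hk'⟩ := hk.exists_left_inv
  refine ⟨((j - i) * k').val, ?_⟩
  rw [ZMod.natCast_zmod_val, mul_assoc, hk', mul_one, add_sub_cancel]

def translatedCut (n a b c : ℕ) : ZMod n → ZMod n := (· - 1) ∘ cutPerm n a b c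

theorem cutPerm_eq_id {n a b c : ℕ} (h : b = 0 ∨ c = 0) : cutPerm n a b c = id := by
  funext x
  rcases h with rfl | rfl <;> simp only [cutPerm] <;> split_ifs <;> first | omega | simp

theorem cutPerm_add_natCast {n a b c : ℕ} [NeZero n] (h : a + b + c ≤ n) (x : ZMod n) :
    cutPerm n a b c (x + a) = cutPerm n 0 b c x + a := by
  have hx := x.val_lt
  have hcast : x + a = ((x.val + a : ℕ) : ZMod n) := by push_cast [ZMod.natCast_zmod_val]; rfl
  rcases lt_or_ge (x.val + a) n with hlt | hge
  · have hv : (x + a).val = x.val + a := by rw [hcast, ZMod.val_cast_of_lt hlt]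
    simp only [cutPerm, hv]
    split_ifs <;> first | omega | ring
  · have hv : (x + a).val = x.val + a - n := by
      rw [hcast, ZMod.val_natCast, Nat.mod_eq_sub_mod hge, Nat.mod_eq_of_lt (by omega)]
    simp only [cutPerm, hv]
    split_ifs <;> first | omega | ring

theorem translatedCut_add_natCast {n a b c : ℕ} [NeZero n] (h : a + b + c ≤ n) (x : ZMod n) :
    translatedCut n a b c (x + a) = translatedCut n 0 b c x + a := by
  simp only [translatedCut, comp_apply, cutPerm_add_natCast h]
  ring

section CutAtZero

variable {n b c : ℕ}

theorem translatedCut_zero_apply (x : ZMod n) :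
    translatedCut n 0 b c x =
      if x.val < b then x + c - 1 else if x.val < b + c then x - b - 1 else x - 1 := by
  simp only [translatedCut, cutPerm, comp_apply, Nat.not_lt_zero, if_false, zero_add]
  split_ifs <;> rfl

theorem translatedCut_zero_natCast_eq_last (hc : 1 ≤ c) (hbc : b + c ≤ n) :
    translatedCut n 0 b c b = ((n - 1 : ℕ) : ZMod n) := by
  rw [translatedCut_zero_apply, ZMod.val_cast_of_lt (by omega), if_neg (by omega),
    if_pos (by omega), Nat.cast_sub (by omega), ZMod.natCast_self]
  ring

theorem reflTransGen_translatedCut_zero_natCast_of_le {i j : ℕ} (hi : b + c ≤ i + 1)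
    (hij : i ≤ j) (hj : j < n) :
    ReflTransGen (translatedCut n 0 b c · = ·) (j : ZMod n) (i : ZMod n) := by
  induction j, hij using Nat.le_induction with
  | base => exact .refl
  | succ j hij ih =>
    refine .head ?_ (ih (by omega))
    rw [translatedCut_zero_apply, ZMod.val_cast_of_lt hj, if_neg (by omega), if_neg (by omega)]
    push_cast
    ring

theorem reflTransGen_translatedCut_zero_window_add (hc : 1 ≤ c) (hbc : b + c ≤ n)
    (i : ZMod (b + c)) :
    ReflTransGen (translatedCut n 0 b c · = ·) (i.val : ZMod n)
      ((i + (c - 1 : ℕ)).val : ZMod n) := by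
  have : NeZero (b + c) := ⟨by omega⟩
  have hi := i.val_lt
  have hk : ((c - 1 : ℕ) : ZMod (b + c)).val = c - 1 := ZMod.val_cast_of_lt (by omega)
  have hiv : ((i.val : ℕ) : ZMod n).val = i.val := ZMod.val_cast_of_lt (by omega)
  rcases lt_trichotomy i.val b with hlt | heq | hgt
  · rw [ZMod.val_add_of_lt (by omega), hk]
    refine .single ?_
    rw [translatedCut_zero_apply, hiv, if_pos hlt]
    push_cast [Nat.cast_sub hc]
    ring
  · rw [ZMod.val_add_of_lt (by omega), hk, heq]
    refine .head (translatedCut_zero_natCast_eq_last hc hbc) ?_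
    exact reflTransGen_translatedCut_zero_natCast_of_le (by omega) (by omega) (by omega)
  · rw [ZMod.val_add_of_le (by omega), hk]
    refine .single ?_
    rw [translatedCut_zero_apply, hiv, if_neg (by omega), if_pos (by omega)]
    push_cast [Nat.cast_sub hc, Nat.cast_sub (show b + c ≤ i.val + (c - 1) by omega)]
    ring

theorem reflTransGen_translatedCut_zero_window (hc : 1 ≤ c) (hbc : b + c ≤ n)
    (hcop : Nat.Coprime (c - 1) (b + c)) (i j : ZMod (b + c)) :
    ReflTransGen (translatedCut n 0 b c · = ·) (i.val : ZMod n) (j.val : ZMod n) := by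
  have : NeZero (b + c) := ⟨by omega⟩
  obtain ⟨t, rfl⟩ := ZMod.exists_add_nat_mul_eq_of_isUnit
    ((ZMod.isUnit_iff_coprime _ _).2 hcop) i j
  induction t with
  | zero => simpa using ReflTransGen.refl
  | succ t ih =>
    rw [Nat.cast_succ, add_one_mul, ← add_assoc]
    exact ih.trans (reflTransGen_translatedCut_zero_window_add hc hbc _)

variable [NeZero n]

theorem isCyclicMap_translatedCut_zero (hc : 1 ≤ c) (hbc : b + c ≤ n)
    (hcop : Nat.Coprime (c - 1) (b + 1)) : IsCyclicMap (translatedCut n 0 b c) := by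
  have : NeZero (b + c) := ⟨by omega⟩
  replace hcop : Nat.Coprime (c - 1) (b + c) := by
    rwa [show b + c = b + 1 + (c - 1) by omega, Nat.coprime_add_self_right]
  have window (x : ZMod n) (hx : x.val < b + c) : ∃ i : ZMod (b + c), (i.val : ZMod n) = x :=
    ⟨x.val, by rw [ZMod.val_cast_of_lt hx, ZMod.natCast_zmod_val]⟩
  set hub : ZMod (b + c) := ((b + c - 1 : ℕ) : ZMod (b + c))
  have hhub : hub.val = b + c - 1 := ZMod.val_cast_of_lt (by omega)
  rw [isCyclicMap_iff_forall_reflTransGen]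
  have to_hub (x : ZMod n) :
      ReflTransGen (translatedCut n 0 b c · = ·) x (hub.val : ZMod n) := by
    rcases lt_or_ge x.val (b + c) with hx | hx
    · obtain ⟨i, rfl⟩ := window x hx
      exact reflTransGen_translatedCut_zero_window hc hbc hcop i hub
    · rw [hhub, ← ZMod.natCast_zmod_val x]
      exact reflTransGen_translatedCut_zero_natCast_of_le (by omega) (by omega) x.val_lt
  have from_hub (y : ZMod n) :
      ReflTransGen (translatedCut n 0 b c · = ·) (hub.val : ZMod n) y := by
    rcases lt_or_ge y.val (b + c) with hy | hy
    · obtain ⟨j, rfl⟩ := window y hy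
      exact reflTransGen_translatedCut_zero_window hc hbc hcop hub j
    · have hbv : ((b : ZMod (b + c)).val : ZMod n) = b := by rw [ZMod.val_cast_of_lt (by omega)]
      refine ((reflTransGen_translatedCut_zero_window hc hbc hcop hub b).trans ?_)
      rw [hbv]
      refine .head (translatedCut_zero_natCast_eq_last hc hbc) ?_
      rw [← ZMod.natCast_zmod_val y]
      exact reflTransGen_translatedCut_zero_natCast_of_le (by omega)
        (by have := y.val_lt; omega) (by omega)
  exact fun x y => (to_hub x).trans (from_hub y)

theorem natCast_min_val_translatedCut_zero {e : ℕ} (hc : 1 ≤ c) (hbc : b + c ≤ n)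
    (hce : (c : ZMod e) = 1) (hbe : (b : ZMod e) = -1) (x : ZMod n) :
    ((min (translatedCut n 0 b c x).val (b + c - 1) : ℕ) : ZMod e) =
      (min x.val (b + c - 1) : ℕ) := by
  have hx := x.val_lt
  have hxv : (x.val : ZMod n) = x := ZMod.natCast_zmod_val x
  rw [translatedCut_zero_apply]
  split_ifs with h₁ h₂
  · have hval : (x + c - 1).val = x.val + (c - 1) := by
      rw [← ZMod.val_cast_of_lt (show x.val + (c - 1) < n by omega)]
      congr 1
      push_cast [Nat.cast_sub hc, hxv]
      ring
    rw [hval, min_eq_left (by omega), min_eq_left (by omega)]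
    push_cast [Nat.cast_sub hc, hce]
    ring
  · rcases eq_or_lt_of_le (not_lt.1 h₁) with heq | hgt
    · have hval : (x - b - 1).val = n - 1 := by
        rw [← ZMod.val_cast_of_lt (show n - 1 < n by omega)]
        congr 1
        rw [← hxv, ← heq]
        push_cast [Nat.cast_sub (show 1 ≤ n by omega), ZMod.natCast_self]
        ring
      rw [hval, min_eq_right (by omega), min_eq_left (by omega), ← heq]
      push_cast [Nat.cast_sub (show 1 ≤ b + c by omega), hce]
      ring
    · have hval : (x - b - 1).val = x.val - (b + 1) := by
        rw [← ZMod.val_cast_of_lt (show x.val - (b + 1) < n by omega)]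
        congr 1
        push_cast [Nat.cast_sub (show b + 1 ≤ x.val by omega), hxv]
        ring
      rw [hval, min_eq_left (by omega), min_eq_left (by omega)]
      push_cast [Nat.cast_sub (show b + 1 ≤ x.val by omega), hbe]
      ring
  · have hval : (x - 1).val = x.val - 1 := by
      rw [← ZMod.val_cast_of_lt (show x.val - 1 < n by omega)]
      congr 1
      push_cast [Nat.cast_sub (show 1 ≤ x.val by omega), hxv]
      ring
    rw [hval, min_eq_right (by omega), min_eq_right (by omega)]

theorem coprime_of_isCyclicMap_translatedCut_zero (hb : 1 ≤ b) (hc : 1 ≤ c) (hbc : b + c ≤ n)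
    (h : IsCyclicMap (translatedCut n 0 b c)) : Nat.Coprime (c - 1) (b + 1) := by
  set e := Nat.gcd (c - 1) (b + 1)
  have hce : (c : ZMod e) = 1 := by
    have := (ZMod.natCast_eq_zero_iff (c - 1) e).2 (Nat.gcd_dvd_left _ _)
    rw [Nat.cast_sub hc, Nat.cast_one, sub_eq_zero] at this
    exact this
  have hbe : (b : ZMod e) = -1 := by
    have := (ZMod.natCast_eq_zero_iff (b + 1) e).2 (Nat.gcd_dvd_right _ _)
    rwa [Nat.cast_add, Nat.cast_one, add_eq_zero_iff_eq_neg] at this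
  have hconst := h.apply_eq_of_apply_comp_eq
    (χ := fun x => ((min x.val (b + c - 1) : ℕ) : ZMod e))
    (natCast_min_val_translatedCut_zero hc hbc hce hbe) 0 1
  have : Fact (1 < n) := ⟨by omega⟩
  rw [ZMod.val_zero, ZMod.val_one, Nat.zero_min, min_eq_left (by omega), Nat.cast_zero,
    Nat.cast_one, eq_comm, ZMod.one_eq_zero_iff] at hconst
  exact hconst

theorem isCyclicMap_translatedCut_zero_iff (hb : 1 ≤ b) (hc : 1 ≤ c) (hbc : b + c ≤ n) :
    IsCyclicMap (translatedCut n 0 b c) ↔ Nat.Coprime (c - 1) (b + 1) :=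
  ⟨coprime_of_isCyclicMap_translatedCut_zero hb hc hbc, isCyclicMap_translatedCut_zero hc hbc⟩

end CutAtZero

/-- `T_{n,1} ∘ Cut_{n,a,b,c}` is a cyclic permutation of `ℤ/nℤ` iff
`gcd(c - 1, b + 1) = 1` (gcd of integers). -/
theorem translated_cut_cyclic_iff (n a b c : ℕ) (hn : 1 ≤ n) (habc : a + b + c ≤ n) :
    (∀ x y : ZMod n,
        ∃ m : ℕ, ((fun k : ZMod n => k - 1) ∘ cutPerm n a b c)^[m] x = y)
      ↔ Int.gcd ((c : ℤ) - 1) ((b : ℤ) + 1) = 1 := by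
  have : NeZero n := ⟨by omega⟩
  change IsCyclicMap (translatedCut n a b c) ↔ _
  by_cases hdeg : b = 0 ∨ c = 0
  · rw [translatedCut, cutPerm_eq_id hdeg, comp_id]
    refine iff_of_true isCyclicMap_sub_one ?_
    rcases hdeg with rfl | rfl <;> simp
  · have hc : 1 ≤ c := by omega
    rw [← isCyclicMap_iff_of_semiconj (Equiv.addRight (a : ZMod n))
        fun x => (translatedCut_add_natCast habc x).symm,
      isCyclicMap_translatedCut_zero_iff (by omega) hc (by omega), Nat.Coprime,
      ← Int.gcd_natCast_natCast]
    push_cast [Nat.cast_sub hc]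
    rfl
end

section
/- The sequence (φ(n))_{n≥1} of Euler totient values is not P-recursive: there do not exist polynomials A_0(X), …, A_k(X) with integer coefficients, A_k ≠ 0, such that Σ_{i=0}^k A_i(n) φ(n+i) = 0 for all integers n ≥ 1. -/
/-!
Fix a prime `q` larger than the degree and the leading coefficient of `A_k`. For every
residue `a ≢ 0, 1 (mod q)` one can find `n` such that `n + k` is a prime `p ≡ a (mod q)`,
while each of `n, …, n + k - 1` is divisible by a prime `r ≡ 1 (mod q)`, so that
`q ∣ r - 1 = φ(r) ∣ φ(n + i)`: choose distinct such primes `r_i`, solve the congruences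
`n + i ≡ 0 (mod r_i)`, `n + k ≡ a (mod q)` by the Chinese remainder theorem, and take `n + k`
prime in the resulting class by Dirichlet's theorem. Reducing the recurrence at this `n`
modulo `q` leaves `A_k(n) (a - 1) ≡ 0`, so `A_k` has the `q - 2` roots `a - k` modulo `q`,
more than its degree.
-/

open Finset Polynomial
open scoped Nat

theorem Prime.dvd_of_sum_range_succ_mul_eq_zero {R : Type*} [CommRing R] {q : R}
    (hq : Prime q) {k : ℕ} {c u : ℕ → R} (hsum : ∑ i ∈ range (k + 1), c i * u i = 0)
    (hu : ∀ i < k, q ∣ u i) (hk : ¬ q ∣ u k) : q ∣ c k := by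
  rw [sum_range_succ] at hsum
  have hinit : q ∣ ∑ i ∈ range k, c i * u i :=
    dvd_sum fun i hi => dvd_mul_of_dvd_right (hu i (mem_range.mp hi)) (c i)
  have hlast : q ∣ c k * u k := (dvd_add_right hinit).mp (hsum ▸ dvd_zero q)
  exact (hq.dvd_or_dvd hlast).resolve_right hk

theorem Nat.exists_residue_forall_dvd_totient_sub {q a : ℕ} (hq : q ≠ 0) (ha : a.Coprime q)
    (S : Finset ℕ) (hS : 0 ∉ S) :
    ∃ M c, M ≠ 0 ∧ c.Coprime M ∧
      ∀ x, x ≡ c [MOD M] → x ≡ a [MOD q] ∧ ∀ j ∈ S, j ≤ x → q ∣ φ (x - j) := by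
  induction S using Finset.induction_on with
  | empty => exact ⟨q, a, hq, ha, fun x hx => ⟨hx, by simp⟩⟩
  | insert j S _ ih =>
    rw [mem_insert, not_or] at hS
    obtain ⟨M, c, hM, hcM, hc⟩ := ih hS.2
    obtain ⟨r, hr, hMjr, hr1⟩ := Nat.exists_prime_gt_modEq_one (M + j) hq
    have hMr : M.Coprime r :=
      ((hr.coprime_iff_not_dvd).mpr (Nat.not_dvd_of_pos_of_lt (by omega) (by omega))).symm
    have hjr : j.Coprime r :=
      ((hr.coprime_iff_not_dvd).mpr (Nat.not_dvd_of_pos_of_lt (by omega) (by omega))).symm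
    obtain ⟨c', hc'M, hc'r⟩ := Nat.chineseRemainder hMr c j
    refine ⟨M * r, c', mul_ne_zero hM hr.ne_zero,
      Nat.Coprime.mul_right (hc'M.gcd_eq.trans hcM) (hc'r.gcd_eq.trans hjr), fun x hx => ?_⟩
    obtain ⟨hxa, hxS⟩ := hc x ((hx.of_mul_right r).trans hc'M)
    refine ⟨hxa, fun i hi hix => ?_⟩
    rcases mem_insert.mp hi with rfl | hi
    · have hrx : r ∣ x - i := (Nat.modEq_iff_dvd' hix).mp ((hx.of_mul_left M).trans hc'r).symm
      calc q ∣ r - 1 := (Nat.modEq_iff_dvd' hr.one_le).mp hr1.symm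
        _ = φ r := (Nat.totient_prime hr).symm
        _ ∣ φ (x - i) := Nat.totient_dvd_of_dvd hrx
    · exact hxS i hi hix

theorem eval_map_eq_zero_of_totient_recurrence {k : ℕ} {A : ℕ → ℤ[X]}
    (hrec : ∀ n : ℕ, 1 ≤ n →
      ∑ i ∈ range (k + 1), (A i).eval (n : ℤ) * (φ (n + i) : ℤ) = 0)
    {q : ℕ} (hq : q.Prime) {x : ZMod q} (hx0 : x + k ≠ 0) (hx1 : x + k ≠ 1) :
    ((A k).map (Int.castRingHom (ZMod q))).eval x = 0 := by
  have : Fact q.Prime := ⟨hq⟩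
  obtain ⟨M, c, hM, hcM, hc⟩ := Nat.exists_residue_forall_dvd_totient_sub hq.ne_zero
    (ZMod.val_coe_unit_coprime (Units.mk0 _ hx0)) (Icc 1 k) (by simp)
  obtain ⟨p, hpk, hp, hpc⟩ := Nat.forall_exists_prime_gt_and_modEq k hM hcM
  obtain ⟨hpa, hdvd⟩ := hc p hpc
  have hpx : (p : ZMod q) = x + k := by
    rw [(ZMod.natCast_eq_natCast_iff _ _ _).mpr hpa]
    exact ZMod.natCast_zmod_val _
  have hn : ((p - k : ℕ) : ZMod q) = x := by
    rw [Nat.cast_sub hpk.le, hpx, add_sub_cancel_right]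
  have hdvd_eval : (q : ℤ) ∣ (A k).eval ((p - k : ℕ) : ℤ) := by
    refine (Nat.prime_iff_prime_int.mp hq).dvd_of_sum_range_succ_mul_eq_zero
      (hrec (p - k) (by omega)) (fun i hi => ?_) ?_
    · have hpi : p - k + i = p - (k - i) := by omega
      rw [hpi, Int.natCast_dvd_natCast]
      exact hdvd (k - i) (by simp; omega) (by omega)
    · rw [Nat.sub_add_cancel hpk.le, Nat.totient_prime hp, Int.natCast_dvd_natCast,
        ← ZMod.natCast_eq_zero_iff, Nat.cast_sub hp.one_le, hpx, Nat.cast_one, sub_eq_zero]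
      exact hx1
  rw [← hn, ← Int.cast_natCast, eval_intCast_map, eq_intCast, ZMod.intCast_zmod_eq_zero_iff_dvd]
  exact hdvd_eval

/-- The sequence `(φ(n))_{n ≥ 1}` of Euler totient values is not P-recursive:
there are no integer polynomials `A_0, …, A_k` with `A_k ≠ 0` such that
`∑_{i=0}^k A_i(n) φ(n+i) = 0` for all `n ≥ 1`. -/
theorem totient_not_p_recursive :
    ¬ ∃ (k : ℕ) (A : ℕ → Polynomial ℤ), A k ≠ 0 ∧
      ∀ n : ℕ, 1 ≤ n →
        (∑ i ∈ Finset.range (k + 1),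
          (A i).eval (n : ℤ) * (Nat.totient (n + i) : ℤ)) = 0 := by
  rintro ⟨k, A, hAk, hrec⟩
  obtain ⟨q, hq_large, hq⟩ :=
    Nat.exists_infinite_primes ((A k).leadingCoeff.natAbs + (A k).natDegree + 3)
  have : Fact q.Prime := ⟨hq⟩
  set B := (A k).map (Int.castRingHom (ZMod q))
  have hB : B = 0 := by
    refine eq_zero_of_natDegree_lt_card_of_eval_eq_zero' B
      (univ \ {-(k : ZMod q), (1 - k : ZMod q)})
      (fun x hx => eval_map_eq_zero_of_totient_recurrence hrec hq ?_ ?_) ?_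
    · exact fun h => by simp [eq_neg_of_add_eq_zero_left h] at hx
    · exact fun h => by simp [eq_sub_of_add_eq h] at hx
    · have hpair : #{-(k : ZMod q), (1 - k : ZMod q)} = 2 :=
        card_pair fun h => by simpa using congrArg (· + (k : ZMod q)) h
      rw [card_sdiff_of_subset (subset_univ _), hpair, card_univ, ZMod.card]
      have hdeg : B.natDegree ≤ (A k).natDegree := natDegree_map_le
      omega
  have hlc : (q : ℤ) ∣ (A k).leadingCoeff := by
    rw [← ZMod.intCast_zmod_eq_zero_iff_dvd]
    simpa [B] using congrArg (coeff · (A k).natDegree) hB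
  have := Int.natAbs_le_of_dvd_ne_zero hlc (leadingCoeff_ne_zero.mpr hAk)
  omega
end

section
/- Define φ̂_k = Σ_{j ≤ k, j ≡ k (mod 2), j ≥ 1} φ(j). Then as k → ∞, φ̂_{2k} ~ (4/π²) k² and φ̂_{2k−1} ~ (8/π²) k²; equivalently φ̂_k ~ (1 + 1_{k odd}) k²/π². -/
/-!
Möbius inversion gives `Φ(n) := ∑_{j ≤ n} φ(j) = ∑_{d ≤ n} μ(d) ⌊n/d⌋(⌊n/d⌋ + 1)/2`; the `d`-th term
divided by `n²` is bounded by `1/d²` and tends to `μ(d)/(2d²)`, so dominated convergence gives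
`Φ(n)/n² → 1/(2ζ(2)) = 3/π²`. Since `φ(2m)` is `φ(m)` for odd `m` and `2φ(m)` for even `m`,
`φ̂_{2n} = Φ(n) + φ̂_{2⌊n/2⌋}`, hence `φ̂_{2n} = ∑_i Φ(⌊n/2^i⌋)`, and dominated convergence against
`4^{-i}` gives `φ̂_{2n}/n² → (3/π²) ∑_i 4^{-i} = 4/π²`. The odd case follows from
`φ̂_{2n} + φ̂_{2n-1} = Φ(2n) ~ 12n²/π²`.
-/

open Filter

/-- `φ̂_k = ∑_{i=0}^{⌊(k-1)/2⌋} φ(k - 2i)`, the sum of `φ(j)` over `1 ≤ j ≤ k`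
with `j ≡ k (mod 2)`. -/
def phiHat (k : ℕ) : ℕ :=
  ∑ i ∈ Finset.range ((k - 1) / 2 + 1), Nat.totient (k - 2 * i)

open ArithmeticFunction Finset
open scoped ArithmeticFunction.Moebius

def totientSum (n : ℕ) : ℕ := ∑ j ∈ Ioc 0 n, j.totient

lemma totientSum_succ (n : ℕ) : totientSum (n + 1) = totientSum n + (n + 1).totient :=
  sum_Ioc_succ_top (Nat.zero_le n) _

lemma totientSum_le_sq (n : ℕ) : totientSum n ≤ n ^ 2 :=
  calc totientSum n ≤ ∑ _j ∈ Ioc 0 n, n :=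
        sum_le_sum fun j hj => (Nat.totient_le j).trans (mem_Ioc.mp hj).2
    _ = n ^ 2 := by simp [sq]

lemma phiHat_add_two (k : ℕ) : phiHat (k + 2) = phiHat k + (k + 2).totient := by
  rcases k.eq_zero_or_pos with rfl | hk
  · simp [phiHat]
  rw [phiHat, show (k + 2 - 1) / 2 + 1 = (k - 1) / 2 + 1 + 1 by omega, sum_range_succ', phiHat]
  simp only [mul_zero, Nat.sub_zero]
  congr 1
  refine sum_congr rfl fun i _ => ?_
  congr 1
  omega

lemma phiHat_add_phiHat_succ (n : ℕ) : phiHat n + phiHat (n + 1) = totientSum (n + 1) := by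
  induction n with
  | zero => simp [phiHat, totientSum]
  | succ n ih => rw [phiHat_add_two, totientSum_succ, ← ih]; ring

lemma phiHat_two_mul (n : ℕ) : phiHat (2 * n) = ∑ m ∈ Ioc 0 n, (2 * m).totient := by
  induction n with
  | zero => simp [phiHat]
  | succ n ih => rw [sum_Ioc_succ_top n.zero_le, ← ih, mul_add_one, phiHat_add_two]

lemma totient_two_mul (m : ℕ) : (2 * m).totient = m.totient + if 2 ∣ m then m.totient else 0 := by
  split_ifs with h
  · rw [Nat.totient_mul_of_prime_of_dvd Nat.prime_two h, two_mul]
  · rw [Nat.totient_mul (Nat.coprime_two_left.mpr (Nat.odd_iff.mpr (by omega))), Nat.totient_two,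
      one_mul, add_zero]

lemma sum_totient_two_mul_Ioc_div_two (n : ℕ) :
    ∑ m ∈ Ioc 0 (n / 2), (2 * m).totient = ∑ m ∈ Ioc 0 n with 2 ∣ m, m.totient := by
  have hdvd : {m ∈ Ioc 0 n | 2 ∣ m} =
      (Ioc 0 (n / 2)).map ⟨(2 * ·), mul_right_injective₀ two_ne_zero⟩ := by
    ext m
    simp only [mem_filter, mem_Ioc, Finset.mem_map, Function.Embedding.coeFn_mk]
    constructor
    · rintro ⟨⟨h0, hn⟩, j, rfl⟩
      exact ⟨j, ⟨by omega, by omega⟩, rfl⟩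
    · rintro ⟨j, ⟨h0, hn⟩, rfl⟩
      exact ⟨⟨by omega, by omega⟩, dvd_mul_right 2 j⟩
  rw [hdvd, sum_map]
  rfl

lemma phiHat_two_mul_eq_totientSum_add (n : ℕ) :
    phiHat (2 * n) = totientSum n + phiHat (2 * (n / 2)) := by
  rw [phiHat_two_mul, phiHat_two_mul, totientSum, sum_totient_two_mul_Ioc_div_two, sum_filter,
    ← sum_add_distrib]
  exact sum_congr rfl fun m _ => totient_two_mul m

lemma phiHat_two_mul_eq_sum_totientSum {n K : ℕ} (h : n < 2 ^ K) :
    phiHat (2 * n) = ∑ i ∈ range K, totientSum (n / 2 ^ i) := by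
  induction K generalizing n with
  | zero => simp_all [phiHat]
  | succ K ih =>
    rw [phiHat_two_mul_eq_totientSum_add, ih (by rw [pow_succ] at h; omega), sum_range_succ']
    simp [Nat.div_div_eq_div_mul, pow_succ', add_comm]

lemma natCast_div_sq_div_sq_le (n d : ℕ) : ((n / d : ℕ) : ℝ) ^ 2 / n ^ 2 ≤ 1 / d ^ 2 := by
  rcases eq_or_ne n 0 with rfl | hn
  · simp
  calc ((n / d : ℕ) : ℝ) ^ 2 / (n : ℝ) ^ 2 ≤ ((n : ℝ) / d) ^ 2 / n ^ 2 := by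
        gcongr; exact Nat.cast_div_le
    _ = 1 / (d : ℝ) ^ 2 := by field_simp

lemma tendsto_natCast_div_div {d : ℕ} (hd : d ≠ 0) :
    Tendsto (fun n : ℕ => ((n / d : ℕ) : ℝ) / n) atTop (nhds (1 / d)) := by
  have h := (tendsto_nat_floor_div_atTop (R := ℝ)).comp
    ((tendsto_natCast_atTop_atTop (R := ℝ)).atTop_div_const (r := (d : ℝ)) (by positivity))
  refine (h.div_const (d : ℝ)).congr fun n => ?_
  rw [Function.comp_apply, Nat.floor_div_eq_div, div_div, div_mul_cancel₀ _ (by positivity)]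

lemma tendsto_comp_div_div_sq {f : ℕ → ℝ} {c : ℝ}
    (hf : Tendsto (fun n : ℕ => f n / n ^ 2) atTop (nhds c)) {d : ℕ} (hd : d ≠ 0) :
    Tendsto (fun n : ℕ => f (n / d) / n ^ 2) atTop (nhds (c / d ^ 2)) := by
  have h := (hf.comp (Nat.tendsto_div_const_atTop hd)).mul ((tendsto_natCast_div_div hd).pow 2)
  convert h.congr' ?_ using 2
  · field_simp
  · filter_upwards [eventually_ge_atTop d] with n hn
    have hm : ((n / d : ℕ) : ℝ) ≠ 0 := by simpa using ⟨hd, hn⟩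
    have hn : (n : ℝ) ≠ 0 := by simpa using (Nat.pos_of_ne_zero hd).trans_le hn |>.ne'
    simp only [Function.comp_apply]
    field_simp

lemma tendsto_comp_mul_div_sq {f : ℕ → ℝ} {c : ℝ}
    (hf : Tendsto (fun n : ℕ => f n / n ^ 2) atTop (nhds c)) {d : ℕ} (hd : d ≠ 0) :
    Tendsto (fun n : ℕ => f (d * n) / n ^ 2) atTop (nhds (c * d ^ 2)) := by
  have h := (hf.comp (tendsto_id.const_mul_atTop' (Nat.pos_of_ne_zero hd))).mul_const
    ((d : ℝ) ^ 2)
  refine h.congr' ?_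
  filter_upwards [eventually_ne_atTop 0] with n hn
  simp only [Function.comp_apply, id, Nat.cast_mul]
  field_simp

lemma moebius_mul_id_apply {n : ℕ} (hn : 0 < n) :
    ((μ : ArithmeticFunction ℝ) * ((ArithmeticFunction.id : ArithmeticFunction ℕ) :
      ArithmeticFunction ℝ)) n = n.totient := by
  rw [mul_apply]
  simpa using (sum_eq_iff_sum_mul_moebius_eq (f := fun n => (n.totient : ℝ))
    (g := fun n => (n : ℝ)) |>.mp (fun n _ => by exact_mod_cast Nat.sum_totient n)) n hn

lemma sum_Ioc_natCast (k : ℕ) : ∑ m ∈ Ioc 0 k, (m : ℝ) = k * (k + 1) / 2 := by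
  induction k with
  | zero => simp
  | succ k ih => rw [sum_Ioc_succ_top k.zero_le, ih]; push_cast; ring

lemma totientSum_eq_sum_moebius (n : ℕ) :
    (totientSum n : ℝ) = ∑ d ∈ Ioc 0 n, (μ d : ℝ) * ((n / d : ℕ) * ((n / d : ℕ) + 1) / 2) := by
  rw [totientSum, Nat.cast_sum,
    ← sum_congr rfl fun j hj => moebius_mul_id_apply (mem_Ioc.mp hj).1, sum_Ioc_mul_eq_sum_sum]
  simp [sum_Ioc_natCast]

lemma tsum_moebius_div_sq : ∑' n : ℕ, (μ n : ℝ) / n ^ 2 = 6 / Real.pi ^ 2 := by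
  have h := LSeries_zeta_mul_Lseries_moebius (s := 2) (by norm_num)
  rw [LSeries_zeta_eq_riemannZeta (by norm_num), riemannZeta_two] at h
  have hL : LSeries (fun n => (μ n : ℂ)) 2 = ((∑' n : ℕ, (μ n : ℝ) / n ^ 2 : ℝ) : ℂ) := by
    rw [LSeries, Complex.ofReal_tsum]
    congr 1
    ext n
    rcases eq_or_ne n 0 with rfl | hn
    · simp
    · simp [LSeries.term_of_ne_zero hn]
  apply Complex.ofReal_injective
  have hpi : (Real.pi : ℂ) ≠ 0 := by exact_mod_cast Real.pi_ne_zero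
  rw [← hL]
  push_cast
  field_simp
  linear_combination 6 * h

lemma totientSum_div_sq_eq_tsum (n : ℕ) : (totientSum n : ℝ) / n ^ 2 =
    ∑' d, (μ d : ℝ) * ((n / d : ℕ) * ((n / d : ℕ) + 1) / 2) / n ^ 2 := by
  rw [totientSum_eq_sum_moebius, sum_div, tsum_eq_sum fun d hd => ?_]
  rcases Nat.eq_zero_or_pos d with rfl | hd0
  · simp
  · simp [Nat.div_eq_of_lt (show n < d by simp at hd; omega)]

lemma tendsto_totientSum_div_sq :
    Tendsto (fun n : ℕ => (totientSum n : ℝ) / n ^ 2) atTop (nhds (3 / Real.pi ^ 2)) := by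
  have hlim (d : ℕ) : Tendsto
      (fun n : ℕ => (μ d : ℝ) * ((n / d : ℕ) * ((n / d : ℕ) + 1) / 2) / n ^ 2)
      atTop (nhds ((μ d : ℝ) / d ^ 2 / 2)) := by
    rcases eq_or_ne d 0 with rfl | hd
    · simp
    have h := (((tendsto_natCast_div_div hd).pow 2).add ((tendsto_natCast_div_div hd).mul
      tendsto_one_div_atTop_nhds_zero_nat)).div_const 2 |>.const_mul (μ d : ℝ)
    convert h.congr' ?_ using 2
    · field_simp
      ring
    · filter_upwards [eventually_ne_atTop 0] with n hn
      field_simp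
  have hbound : ∀ᶠ n : ℕ in atTop, ∀ d,
      ‖(μ d : ℝ) * ((n / d : ℕ) * ((n / d : ℕ) + 1) / 2) / n ^ 2‖ ≤ 1 / (d : ℝ) ^ 2 := by
    refine Eventually.of_forall fun n d => ?_
    have hμ : |(μ d : ℝ)| ≤ 1 := by exact_mod_cast abs_moebius_le_one
    have hm : ((n / d : ℕ) : ℝ) ≤ ((n / d : ℕ) : ℝ) ^ 2 := by
      exact_mod_cast Nat.le_self_pow two_ne_zero _
    calc ‖(μ d : ℝ) * ((n / d : ℕ) * ((n / d : ℕ) + 1) / 2) / n ^ 2‖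
        ≤ 1 * ((n / d : ℕ) : ℝ) ^ 2 / n ^ 2 := by
          rw [norm_div, norm_mul, Real.norm_eq_abs, Real.norm_of_nonneg (by positivity),
            Real.norm_of_nonneg (by positivity)]
          gcongr
          linarith
      _ ≤ 1 / (d : ℝ) ^ 2 := by rw [one_mul]; exact natCast_div_sq_div_sq_le n d
  have h := tendsto_tsum_of_dominated_convergence
    (Real.summable_one_div_nat_pow.mpr one_lt_two) hlim hbound
  rw [tsum_div_const, tsum_moebius_div_sq] at h
  convert h.congr fun n => (totientSum_div_sq_eq_tsum n).symm using 2
  field_simp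
  norm_num

lemma phiHat_two_mul_div_sq_eq_tsum (n : ℕ) :
    (phiHat (2 * n) : ℝ) / n ^ 2 = ∑' i, (totientSum (n / 2 ^ i) : ℝ) / n ^ 2 := by
  rw [phiHat_two_mul_eq_sum_totientSum n.lt_two_pow_self, Nat.cast_sum, sum_div,
    tsum_eq_sum fun i hi => ?_]
  rw [mem_range, not_lt] at hi
  rw [Nat.div_eq_of_lt (n.lt_two_pow_self.trans_le (Nat.pow_le_pow_right two_pos hi))]
  simp [totientSum]

lemma tendsto_phiHat_two_mul_div_sq :
    Tendsto (fun n : ℕ => (phiHat (2 * n) : ℝ) / n ^ 2) atTop (nhds (4 / Real.pi ^ 2)) := by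
  have hpow (i : ℕ) : (((2 ^ i : ℕ) : ℝ) ^ 2)⁻¹ = (1 / 4) ^ i := by
    push_cast
    rw [← pow_mul, mul_comm, pow_mul, one_div, inv_pow]
    norm_num
  have hlim (i : ℕ) : Tendsto (fun n : ℕ => (totientSum (n / 2 ^ i) : ℝ) / n ^ 2) atTop
      (nhds (3 / Real.pi ^ 2 * (1 / 4) ^ i)) := by
    rw [← hpow, ← div_eq_mul_inv]
    exact tendsto_comp_div_div_sq tendsto_totientSum_div_sq (pow_ne_zero i two_ne_zero)
  have hbound : ∀ᶠ n : ℕ in atTop, ∀ i,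
      ‖(totientSum (n / 2 ^ i) : ℝ) / n ^ 2‖ ≤ (1 / 4) ^ i := by
    refine Eventually.of_forall fun n i => ?_
    rw [Real.norm_of_nonneg (by positivity), ← hpow, ← one_div]
    refine le_trans ?_ (natCast_div_sq_div_sq_le n (2 ^ i))
    gcongr
    exact_mod_cast totientSum_le_sq _
  have h := tendsto_tsum_of_dominated_convergence
    (summable_geometric_of_lt_one (by norm_num) (by norm_num)) hlim hbound
  rw [tsum_mul_left, tsum_geometric_of_lt_one (by norm_num) (by norm_num)] at h
  convert h.congr fun n => (phiHat_two_mul_div_sq_eq_tsum n).symm using 2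
  ring

/-- As `k → ∞`, `φ̂_{2k} ~ (4/π²) k²` and `φ̂_{2k-1} ~ (8/π²) k²`. -/
theorem phiHat_asymptotics :
    Tendsto (fun k : ℕ => (phiHat (2 * k) : ℝ) / (k : ℝ) ^ 2) atTop
      (nhds (4 / Real.pi ^ 2)) ∧
    Tendsto (fun k : ℕ => (phiHat (2 * k - 1) : ℝ) / (k : ℝ) ^ 2) atTop
      (nhds (8 / Real.pi ^ 2)) := by
  refine ⟨tendsto_phiHat_two_mul_div_sq, ?_⟩
  have hall := tendsto_comp_mul_div_sq tendsto_totientSum_div_sq two_ne_zero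
  convert (hall.sub tendsto_phiHat_two_mul_div_sq).congr' ?_ using 2
  · ring
  · filter_upwards [eventually_ne_atTop 0] with k hk
    have h := phiHat_add_phiHat_succ (2 * k - 1)
    rw [Nat.sub_add_cancel (by omega)] at h
    rw [← sub_div, ← h]
    push_cast
    ring
end

section
/- Let k ≥ 1 and m ≥ 1 be integers and define C_{k,k+m}/2 = Σ_{a=1}^{k} 1_{gcd(a, m+1)=1} + 1_{gcd(k+1, m)=1} + Σ_{a=1}^{k+1} 1_{gcd(a, m−1)=1}. Then the triple generating function Σ_{k≥1} Σ_{m≥1} (C_{k,k+m}/2) z^{2k+m} equals (2/(z(1−z²)) + 1/z²) F(z) + z/(1−z²) − z²/(1−z²)² − 2z/(1−z), where F(z) = (1/2) Σ_{n≥3} φ(n) z^n. -/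
/-!
For a weight `w` on `ℕ × ℕ` put `L(w) = ∑ w(a, b) z^(2a + b)`. Shifting `w` by one step in `a`
(resp. `b`) multiplies `L(w)` by `z⁻²` (resp. `z⁻¹`) once the row `a = 0` (resp. the column
`b = 0`) is removed, and replacing `w` by its partial sums in `a` divides `L(w)` by `1 - z²`.
With these rules each of the three sums making up `C_{k,k+m}/2` is a rational function of `z`
times `F = z³ L((a, b) ↦ 1_{gcd(a+1, b+1)=1})`, up to rows and columns of ones. That `F` has
coefficients `φ(n)/2` comes from `gcd(a, n - 2a) = gcd(a, n)` and from the involution `a ↦ n - a`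
of the units mod `n`, which swaps those below `n/2` with those above.
-/

open PowerSeries

/-- `C_{k,k+m}/2 = ∑_{a=1}^{k} 1_{gcd(a,m+1)=1} + 1_{gcd(k+1,m)=1}
    + ∑_{a=1}^{k+1} 1_{gcd(a,m-1)=1}`. -/
def Chalf (k m : ℕ) : ℕ :=
  ((Finset.Icc 1 k).filter (fun a => Nat.gcd a (m + 1) = 1)).card
    + (if Nat.gcd (k + 1) m = 1 then 1 else 0)
    + ((Finset.Icc 1 (k + 1)).filter (fun a => Nat.gcd a (m - 1) = 1)).card

/-- The triple generating function `H(z) = ∑_{k≥1} ∑_{m≥1} (C_{k,k+m}/2) z^{2k+m}`,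
as a formal power series over `ℚ`: the coefficient of `z^n` is the sum of
`C_{k,k+m}/2` over `k ≥ 1`, `m ≥ 1` with `2k + m = n`. -/
noncomputable def Hseries : PowerSeries ℚ :=
  PowerSeries.mk fun n =>
    ∑ k ∈ Finset.range n,
      if 1 ≤ k ∧ 2 * k + 1 ≤ n then (Chalf k (n - 2 * k) : ℚ) else 0

/-- `Φ(z) = ∑_{n≥3} φ(n) z^n`, so that `F(z) = Φ(z)/2`. -/
noncomputable def Phi3 : PowerSeries ℚ :=
  PowerSeries.mk fun n => if 3 ≤ n then (Nat.totient n : ℚ) else 0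

open Finset

namespace PowerSeries

variable {R : Type*} [CommRing R]

/-- `∑_{a,b} w a b X^(2a + b)`. -/
noncomputable def latticeSeries (w : ℕ → ℕ → R) : R⟦X⟧ :=
  mk fun n => ∑ a ∈ range (n / 2 + 1), w a (n - 2 * a)

theorem latticeSeries_add (w₁ w₂ : ℕ → ℕ → R) :
    latticeSeries (fun a b => w₁ a b + w₂ a b) = latticeSeries w₁ + latticeSeries w₂ := by
  ext n
  simp [latticeSeries, sum_add_distrib]

theorem X_sq_mul_latticeSeries_succ_left (w : ℕ → ℕ → R) :
    X ^ 2 * latticeSeries (fun a b => w (a + 1) b) = latticeSeries w - mk (w 0) := by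
  ext n
  rw [coeff_X_pow_mul', map_sub]
  simp only [latticeSeries, coeff_mk]
  rw [sum_range_succ' _ (n / 2), mul_zero, Nat.sub_zero, add_sub_cancel_right]
  split_ifs with hn
  · rw [show (n - 2) / 2 + 1 = n / 2 by omega]
    exact sum_congr rfl fun a _ => by rw [show n - 2 - 2 * a = n - 2 * (a + 1) by omega]
  · simp [show n / 2 = 0 by omega]

theorem X_mul_latticeSeries_succ_right (w : ℕ → ℕ → R) :
    X * latticeSeries (fun a b => w a (b + 1)) =
      latticeSeries w - mk fun n => if 2 ∣ n then w (n / 2) 0 else 0 := by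
  ext n
  rw [← pow_one X, coeff_X_pow_mul', map_sub]
  simp only [latticeSeries, coeff_mk]
  obtain ⟨k, rfl | rfl⟩ := Nat.even_or_odd' n
  · rw [sum_range_succ _ (2 * k / 2), if_pos (dvd_mul_right 2 k)]
    rcases Nat.eq_zero_or_pos k with rfl | hk
    · simp
    rw [if_pos (by omega), show (2 * k - 1) / 2 + 1 = 2 * k / 2 by omega]
    simp only [show 2 * k / 2 = k by omega, Nat.sub_self, add_sub_cancel_right]
    exact sum_congr rfl fun a ha => by
      rw [show 2 * k - 1 - 2 * a + 1 = 2 * k - 2 * a by rw [mem_range] at ha; omega]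
  · rw [if_pos (by omega), if_neg (by omega), sub_zero,
      show (2 * k + 1 - 1) / 2 = (2 * k + 1) / 2 by omega]
    exact sum_congr rfl fun a ha => by
      rw [show 2 * k + 1 - 1 - 2 * a + 1 = 2 * k + 1 - 2 * a by rw [mem_range] at ha; omega]

theorem one_sub_X_sq_mul_latticeSeries_partialSum (w : ℕ → ℕ → R) :
    (1 - X ^ 2) * latticeSeries (fun a b => ∑ i ∈ range (a + 1), w i b) = latticeSeries w := by
  have hshift := X_sq_mul_latticeSeries_succ_left fun a b => ∑ i ∈ range (a + 1), w i b
  simp only [sum_range_succ _ (_ + 1), latticeSeries_add, zero_add, sum_range_one] at hshift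
  linear_combination X_sq_mul_latticeSeries_succ_left w - hshift

theorem one_sub_X_pow_mul_mk_dvd {d : ℕ} (hd : 0 < d) :
    (1 - X ^ d) * mk (fun n => if d ∣ n then (1 : R) else 0) = 1 := by
  ext n
  rw [sub_mul, one_mul, map_sub, coeff_X_pow_mul', coeff_one, coeff_mk]
  rcases lt_or_ge n d with hn | hn
  · simp [hn.not_ge, Nat.dvd_iff_mod_eq_zero, Nat.mod_eq_of_lt hn]
  · have hdvd : d ∣ n ∨ n ≤ d ↔ d ∣ n :=
      ⟨fun h => h.elim id fun h => le_antisymm h hn ▸ dvd_refl n, Or.inl⟩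
    have hn0 : n ≠ 0 := by omega
    simp [hn, Nat.dvd_sub_self_right, hdvd, hn0]

end PowerSeries

theorem Nat.totient_eq_two_mul_card_lt_half {n : ℕ} (hn : 2 < n) :
    n.totient = 2 * #{a ∈ range n | 2 * a < n ∧ a.Coprime n} := by
  have hsplit : n.totient = #{a ∈ range n | 2 * a < n ∧ a.Coprime n} +
      #{a ∈ range n | n < 2 * a ∧ a.Coprime n} := by
    rw [Nat.totient_eq_card_coprime, ← card_union_of_disjoint
      (disjoint_filter.2 fun a _ h₁ h₂ => by omega)]
    congr 1
    ext a
    simp only [mem_filter, mem_union, mem_range]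
    refine ⟨fun ⟨ha, hcop⟩ => ?_, ?_⟩
    · have hhalf : 2 * a ≠ n := fun h => by
        have := hcop.symm.eq_one_of_dvd ⟨2, by omega⟩
        omega
      rcases lt_or_gt_of_ne hhalf with h | h
      exacts [Or.inl ⟨ha, h, hcop.symm⟩, Or.inr ⟨ha, h, hcop.symm⟩]
    · rintro (⟨ha, -, hcop⟩ | ⟨ha, -, hcop⟩) <;> exact ⟨ha, hcop.symm⟩
  have hreflect : #{a ∈ range n | n < 2 * a ∧ a.Coprime n} =
      #{a ∈ range n | 2 * a < n ∧ a.Coprime n} := by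
    have hpos : ∀ a, a.Coprime n → 0 < a := fun a hcop =>
      Nat.pos_of_ne_zero fun h => by rw [h, Nat.coprime_zero_left] at hcop; omega
    refine card_nbij' (n - ·) (n - ·) ?_ ?_ ?_ ?_ <;> intro a ha <;>
      simp only [coe_filter, mem_range, Set.mem_ofPred_eq] at ha ⊢
    · exact ⟨by omega, by omega, (Nat.coprime_self_sub_left ha.1.le).2 ha.2.2⟩
    · have := hpos a ha.2.2
      exact ⟨by omega, by omega, (Nat.coprime_self_sub_left ha.1.le).2 ha.2.2⟩
    · omega
    · have := hpos a ha.2.2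
      omega
  omega

def coprimeWeight (i j a b : ℕ) : ℚ := if (a + i).Coprime (b + j) then 1 else 0

theorem X_sq_mul_latticeSeries_coprimeWeight (i j : ℕ) :
    X ^ 2 * latticeSeries (coprimeWeight (i + 1) j) =
      latticeSeries (coprimeWeight i j) - PowerSeries.mk (coprimeWeight i j 0) := by
  rw [← X_sq_mul_latticeSeries_succ_left]
  simp only [coprimeWeight, add_assoc, add_comm 1 i]
  rfl

theorem X_mul_latticeSeries_coprimeWeight (i j : ℕ) :
    X * latticeSeries (coprimeWeight i (j + 1)) = latticeSeries (coprimeWeight i j) -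
      PowerSeries.mk fun n => if 2 ∣ n then coprimeWeight i j (n / 2) 0 else 0 := by
  rw [← X_mul_latticeSeries_succ_right]
  simp only [coprimeWeight, add_assoc, add_comm 1 j]
  rfl

theorem X_mul_latticeSeries_coprimeWeight_one_one :
    X * latticeSeries (coprimeWeight 1 1) = latticeSeries (coprimeWeight 1 0) - 1 := by
  rw [X_mul_latticeSeries_coprimeWeight]
  congr
  ext n
  simp only [coprimeWeight, coeff_mk, coeff_one, add_zero, Nat.coprime_zero_right,
    Nat.add_eq_right]
  split_ifs <;> first | rfl | (exfalso; omega)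

theorem coeff_latticeSeries_coprimeWeight_zero_zero {n : ℕ} (hn : 2 < n) :
    coeff n (latticeSeries (coprimeWeight 0 0)) = #{a ∈ range n | 2 * a < n ∧ a.Coprime n} := by
  simp only [latticeSeries, coeff_mk, coprimeWeight, add_zero]
  rw [sum_boole]
  congr 2
  ext a
  simp only [mem_filter, mem_range]
  have hshift : 2 * a ≤ n → (a.Coprime (n - 2 * a) ↔ a.Coprime n) := fun h => by
    conv_rhs => rw [← Nat.sub_add_cancel h, Nat.coprime_add_mul_right_right]
  refine ⟨fun ⟨ha, hcop⟩ => ?_, fun ⟨_, ha, hcop⟩ => ⟨by omega, (hshift ha.le).2 hcop⟩⟩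
  have hcop := (hshift (by omega)).1 hcop
  have hhalf : 2 * a ≠ n := fun h => by
    have := hcop.eq_one_of_dvd ⟨2, by omega⟩
    omega
  exact ⟨by omega, by omega, hcop⟩

/-- The paper's `F(z) = ∑_{α,β ≥ 1} 1_{gcd(α,β)=1} z^(2α+β)`. -/
noncomputable def Fseries : ℚ⟦X⟧ := X ^ 3 * latticeSeries (coprimeWeight 1 1)

theorem Phi3_eq_two_mul_Fseries : Phi3 = 2 * Fseries := by
  have hG : Phi3 = 2 * (latticeSeries (coprimeWeight 0 0) - X - X ^ 2) := by
    ext n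
    rcases le_or_gt n 2 with hn | hn
    · interval_cases n <;>
        simp only [Phi3, latticeSeries, coprimeWeight, coeff_mk, two_mul, map_add, map_sub,
          coeff_X, coeff_X_pow, sum_range_succ, sum_range_zero] <;> norm_num
    · rw [Phi3, coeff_mk, if_pos (by omega), Nat.totient_eq_two_mul_card_lt_half hn]
      have hn1 : n ≠ 1 := by omega
      simp [two_mul, coeff_X, coeff_X_pow, coeff_latticeSeries_coprimeWeight_zero_zero hn,
        hn.ne', hn1]
  have hrow :
      X ^ 2 * latticeSeries (coprimeWeight 1 0) = latticeSeries (coprimeWeight 0 0) - X := by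
    rw [X_sq_mul_latticeSeries_coprimeWeight]
    congr
    ext n
    simp [coprimeWeight, coeff_X]
  rw [hG, Fseries]
  linear_combination (-2) * hrow - 2 * X ^ 2 * X_mul_latticeSeries_coprimeWeight_one_one

theorem natCast_card_filter_Icc_one {R : Type*} [AddCommMonoidWithOne R] (p : ℕ → Prop)
    [DecidablePred p] (K : ℕ) :
    (#{a ∈ Icc 1 K | p a} : R) = ∑ i ∈ range K, if p (i + 1) then 1 else 0 := by
  rw [natCast_card_filter, range_eq_Ico, sum_Ico_add' (fun a => if p a then (1 : R) else 0),
    zero_add, Ico_add_one_right_eq_Icc]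

theorem Chalf_add_one_add_one (k m : ℕ) :
    (Chalf (k + 1) (m + 1) : ℚ) = ∑ i ∈ range (k + 1), coprimeWeight 1 2 i m +
      coprimeWeight 2 1 k m + ∑ i ∈ range (k + 2), coprimeWeight 1 0 i m := by
  simp only [Chalf, Nat.cast_add, natCast_card_filter_Icc_one, coprimeWeight,
    ← Nat.coprime_iff_gcd_eq_one]
  push_cast
  rfl

theorem Hseries_eq_X_pow_mul_latticeSeries :
    Hseries = X ^ 3 * latticeSeries fun k m => (Chalf (k + 1) (m + 1) : ℚ) := by
  let w : ℕ → ℕ → ℚ := fun k m => if 1 ≤ k ∧ 1 ≤ m then Chalf k m else 0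
  have hH : Hseries = latticeSeries w := by
    ext n
    simp only [Hseries, latticeSeries, coeff_mk, w]
    rw [← sum_filter, ← sum_filter]
    congr 1
    ext k
    simp only [mem_filter, mem_range]
    omega
  have hrow := X_sq_mul_latticeSeries_succ_left w
  have hcol := X_mul_latticeSeries_succ_right fun a b => w (a + 1) b
  have hrow0 : PowerSeries.mk (w 0) = 0 := by ext; simp [w]
  have hcol0 : (PowerSeries.mk fun n => if 2 ∣ n then w (n / 2 + 1) 0 else 0) = 0 := by
    ext; simp [w]
  have hcorner : (fun a b => w (a + 1) (b + 1)) = fun k m => (Chalf (k + 1) (m + 1) : ℚ) := by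
    funext; simp [w]
  rw [hrow0, sub_zero] at hrow
  rw [hcol0, sub_zero, hcorner] at hcol
  rw [hH, ← hrow, ← hcol]
  ring

/- The three summands of `C_{k,k+m}/2`, with `k, m ≥ 1` shifted to start at `0`. -/

noncomputable def Hseries₁ : ℚ⟦X⟧ :=
  X ^ 3 * latticeSeries fun k m => ∑ i ∈ range (k + 1), coprimeWeight 1 2 i m

noncomputable def Hseries₂ : ℚ⟦X⟧ := X ^ 3 * latticeSeries (coprimeWeight 2 1)

noncomputable def Hseries₃ : ℚ⟦X⟧ :=
  X ^ 3 * latticeSeries fun k m => ∑ i ∈ range (k + 2), coprimeWeight 1 0 i m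

theorem Hseries_eq_add : Hseries = Hseries₁ + Hseries₂ + Hseries₃ := by
  simp only [Hseries_eq_X_pow_mul_latticeSeries, Chalf_add_one_add_one, latticeSeries_add,
    Hseries₁, Hseries₂, Hseries₃]
  ring

theorem Hseries₁_closed_form : X * (1 - X ^ 2) ^ 2 * Hseries₁ = (1 - X ^ 2) * Fseries - X ^ 3 := by
  have hsum := one_sub_X_sq_mul_latticeSeries_partialSum (coprimeWeight 1 2)
  have hcol := X_mul_latticeSeries_coprimeWeight 1 1
  rw [show (PowerSeries.mk fun n => if 2 ∣ n then coprimeWeight 1 1 (n / 2) 0 else 0) =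
      PowerSeries.mk fun n => if 2 ∣ n then 1 else 0 by ext; simp [coprimeWeight]] at hcol
  rw [Hseries₁, Fseries]
  linear_combination (X ^ 4 * (1 - X ^ 2)) * hsum + X ^ 3 * (1 - X ^ 2) * hcol -
    X ^ 3 * one_sub_X_pow_mul_mk_dvd (R := ℚ) two_pos

theorem Hseries₂_closed_form : X ^ 2 * (1 - X) * Hseries₂ = (1 - X) * Fseries - X ^ 3 := by
  have hrow := X_sq_mul_latticeSeries_coprimeWeight 1 1
  rw [show PowerSeries.mk (coprimeWeight 1 1 0) = PowerSeries.mk 1 by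
    ext; simp [coprimeWeight]] at hrow
  rw [Hseries₂, Fseries]
  linear_combination X ^ 3 * (1 - X) * hrow - X ^ 3 * mk_one_mul_one_sub_eq_one ℚ

theorem Hseries₃_closed_form : X ^ 2 * (1 - X) * (1 - X ^ 2) * Hseries₃ =
    (1 - X) * (X * Fseries + X ^ 3) - (1 - X ^ 2) * X ^ 3 := by
  have hrow : X ^ 2 * latticeSeries (fun k m => ∑ i ∈ range (k + 2), coprimeWeight 1 0 i m) =
      latticeSeries (fun k m => ∑ i ∈ range (k + 1), coprimeWeight 1 0 i m) -
        PowerSeries.mk fun m => ∑ i ∈ range (0 + 1), coprimeWeight 1 0 i m :=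
    X_sq_mul_latticeSeries_succ_left fun k m => ∑ i ∈ range (k + 1), coprimeWeight 1 0 i m
  rw [show (PowerSeries.mk fun m => ∑ i ∈ range (0 + 1), coprimeWeight 1 0 i m) =
      PowerSeries.mk 1 by
    ext; simp only [zero_add, sum_range_one, coeff_mk]; simp [coprimeWeight]] at hrow
  rw [Hseries₃, Fseries]
  linear_combination X ^ 3 * (1 - X) * (1 - X ^ 2) * hrow +
    X ^ 3 * (1 - X) * one_sub_X_sq_mul_latticeSeries_partialSum (coprimeWeight 1 0) -
    X ^ 3 * (1 - X) * X_mul_latticeSeries_coprimeWeight_one_one -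
    X ^ 3 * (1 - X ^ 2) * mk_one_mul_one_sub_eq_one ℚ

/-- `H(z) = (2/(z(1−z²)) + 1/z²) F(z) + z/(1−z²) − z²/(1−z²)² − 2z/(1−z)`,
with `F(z) = (1/2) ∑_{n≥3} φ(n) z^n`, stated with denominators cleared
(multiplied through by `2 z² (1−z²)² (1−z)`). -/
theorem Hseries_closed_form :
    2 * (X ^ 2 * (1 - X ^ 2) ^ 2 * (1 - X)) * Hseries
      = (2 * X * (1 - X ^ 2) * (1 - X) + (1 - X ^ 2) ^ 2 * (1 - X)) * Phi3
        + 2 * (X ^ 3 * (1 - X ^ 2) * (1 - X) - X ^ 4 * (1 - X)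
            - 2 * X ^ 3 * (1 - X ^ 2) ^ 2) := by
  rw [Hseries_eq_add, Phi3_eq_two_mul_Fseries]
  linear_combination 2 * X * (1 - X) * Hseries₁_closed_form +
    2 * (1 - X ^ 2) ^ 2 * Hseries₂_closed_form + 2 * (1 - X ^ 2) * Hseries₃_closed_form
end

section
/- Define g_{3,k} = 1_{k=0} + 2(φ(k+2) − 1_{k even} + 2 Σ_{i=1}^{⌊k/2⌋} φ(k+3−2i)) · 1_{k≥1}. Then the formal power series identity Σ_{k≥0} g_{3,k} z^k = 2 (1 + 2z − z²)/(z²(1 − z²)) · (Σ_{n≥3} φ(n) z^n) + (1 − 3z²)/(1 − z²) holds. -/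
/-!
Multiplying by `1 - z²` telescopes the inner sum of `g_{3,k}`: for `k ≥ 1`,
`g_{3,k+2} - g_{3,k} = 2(φ(k+4) + 2φ(k+3) - φ(k+2))`, which is the coefficient of `z^(k+4)` in
`2(1 + 2z - z²) Φ(z)`. The coefficients of `z^0, …, z^4`, where `z²(1 - 3z²)` and the
boundary terms of the telescoping enter, are checked by direct computation.
-/

open PowerSeries

/-- `g_{3,k} = 1_{k=0} + 2(φ(k+2) − 1_{k even} + 2 ∑_{i=1}^{⌊k/2⌋} φ(k+3−2i)) · 1_{k≥1}`. -/
def g3 (k : ℕ) : ℤ :=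
  if k = 0 then 1
  else 2 * ((Nat.totient (k + 2) : ℤ) - (if k % 2 = 0 then 1 else 0)
      + 2 * ∑ i ∈ Finset.Icc 1 (k / 2), (Nat.totient (k + 3 - 2 * i) : ℤ))

theorem sum_Icc_sub_two_mul_eq_sum_range {M : Type*} [AddCommMonoid M] (f : ℕ → M) (k : ℕ) :
    ∑ i ∈ Finset.Icc 1 (k / 2), f (k + 3 - 2 * i)
      = ∑ j ∈ Finset.range (k / 2), f (2 * j + k % 2 + 3) := by
  refine Finset.sum_nbij' (k / 2 - ·) (k / 2 - ·) ?_ ?_ ?_ ?_ ?_ <;>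
    intro i hi <;> simp only [Finset.mem_Icc, Finset.mem_range] at hi ⊢
  all_goals first | omega | congr 1; omega

theorem g3_add_three (k : ℕ) :
    g3 (k + 3) = g3 (k + 1)
      + 2 * (Nat.totient (k + 5) + 2 * Nat.totient (k + 4) - Nat.totient (k + 3)) := by
  have half : (k + 3) / 2 = (k + 1) / 2 + 1 := by omega
  have parity : (k + 3) % 2 = (k + 1) % 2 := by omega
  have last : 2 * ((k + 1) / 2) + (k + 1) % 2 + 3 = k + 4 := by omega
  rw [g3, if_neg (by omega : k + 3 ≠ 0), g3, if_neg (by omega : k + 1 ≠ 0),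
    sum_Icc_sub_two_mul_eq_sum_range (fun j ↦ (Nat.totient j : ℤ)),
    sum_Icc_sub_two_mul_eq_sum_range (fun j ↦ (Nat.totient j : ℤ)),
    half, parity, Finset.sum_range_succ, last]
  ring

theorem coeff_add_four_one_sub_X_sq_mul_X_sq_mul {R : Type*} [CommRing R] (F : R⟦X⟧) (n : ℕ) :
    coeff (n + 4) ((1 - X ^ 2) * (X ^ 2 * F)) = coeff (n + 2) F - coeff n F := by
  rw [sub_mul, one_mul, ← mul_assoc, ← pow_add, map_sub,
    coeff_X_pow_mul F 2 (n + 2), coeff_X_pow_mul F (2 + 2) n]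

theorem coeff_add_five_Phi3_combination (m : ℕ) :
    coeff (m + 5) (2 * (1 + 2 * X - X ^ 2) * Phi3 + X ^ 2 * (1 - 3 * X ^ 2))
      = 2 * (Nat.totient (m + 5) + 2 * Nat.totient (m + 4) - Nat.totient (m + 3) : ℚ) := by
  simp only [← map_ofNat C]
  simp [mul_add, add_mul, sub_mul, mul_sub, mul_assoc, coeff_X_pow_mul', coeff_X_pow,
    coeff_succ_X_mul, Phi3]

/-- `∑_{k≥0} g_{3,k} z^k = 2 (1 + 2z − z²)/(z²(1 − z²)) · Φ(z) + (1 − 3z²)/(1 − z²)`,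
stated with denominators cleared:
`(1 − z²) · z² · ∑ g_{3,k} z^k = 2(1 + 2z − z²) Φ(z) + z²(1 − 3z²)`. -/
theorem g3_generating_function :
    (1 - X ^ 2) * (X ^ 2 * PowerSeries.mk (fun k => (g3 k : ℚ)))
      = 2 * (1 + 2 * X - X ^ 2) * Phi3 + X ^ 2 * (1 - 3 * X ^ 2) := by
  ext n
  rcases lt_or_ge n 5 with hn | hn
  · simp only [← map_ofNat C]
    interval_cases n <;>
      norm_num [mul_add, add_mul, sub_mul, mul_sub, mul_assoc, coeff_X_pow_mul', coeff_X_pow,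
        coeff_succ_X_mul, Phi3, g3, Nat.totient_prime Nat.prime_three,
        (by decide : Nat.totient 4 = 2)]
  · obtain ⟨m, rfl⟩ := Nat.exists_eq_add_of_le' hn
    rw [coeff_add_five_Phi3_combination, coeff_add_four_one_sub_X_sq_mul_X_sq_mul (n := m + 1),
      coeff_mk, coeff_mk, g3_add_three]
    push_cast
    ring
end
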